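/- arXiv:1808.02742 — 3 statements merged into one kernel-verified Lean document; each statement's English description precedes it below -/
import Mathlib

section
/- In the ring R = ℂ[x^{±1}, y^{±1}]/(x^d + y^d - 1), for each d-th root of unity ζ, the element y - ζ is a unit, and likewise x - ζ is a unit; moreover for each primitive (2d)-th root of unity ω with ω^d = -1, the element x - ωy is a unit. -/
open AddMonoidAlgebra

/-- The coordinate `x` in the Laurent polynomial ring `ℂ[x^{±1}, y^{±1}]`. -/
noncomputable def Xf : AddMonoidAlgebra ℂ (Fin 2 →₀ ℤ) :=
  AddMonoidAlgebra.single (Finsupp.single 0 1) 1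

/-- The coordinate `y` in the Laurent polynomial ring `ℂ[x^{±1}, y^{±1}]`. -/
noncomputable def Yf : AddMonoidAlgebra ℂ (Fin 2 →₀ ℤ) :=
  AddMonoidAlgebra.single (Finsupp.single 1 1) 1

/-- The ideal of the very affine Fermat curve `x^d + y^d = 1`. -/
noncomputable def fermatIdeal (d : ℕ) : Ideal (AddMonoidAlgebra ℂ (Fin 2 →₀ ℤ)) :=
  Ideal.span {Xf ^ d + Yf ^ d - 1}

/-- If `Z ^ d - 1` is a unit in a `ℂ`-algebra, then `Z - ζ` is a unit for every
`d`-th root of unity `ζ`. -/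
lemma key_unit {Q : Type*} [CommRing Q] [Algebra ℂ Q] {d : ℕ} (hd : 0 < d)
    (Z : Q) (hZ : IsUnit (Z ^ d - 1)) {ζ : ℂ} (hζ : ζ ^ d = 1) :
    IsUnit (Z - algebraMap ℂ Q ζ) := by
  have hprod := Polynomial.X_pow_sub_one_eq_prod hd (Complex.isPrimitiveRoot_exp d hd.ne')
  have h2 := congrArg (Polynomial.aeval Z) hprod
  simp only [map_sub, map_pow, map_one, Polynomial.aeval_X, map_prod, Polynomial.aeval_C] at h2
  rw [h2] at hZ
  have hmem : ζ ∈ Polynomial.nthRootsFinset d (1 : ℂ) := (Polynomial.mem_nthRootsFinset hd (1 : ℂ)).2 hζ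
  exact isUnit_of_dvd_unit (Finset.dvd_prod_of_mem (fun x => Z - algebraMap ℂ Q x) hmem) hZ

set_option maxHeartbeats 1600000 in
/-- In `R = ℂ[x^{±1},y^{±1}]/(x^d + y^d = 1)`: for each `d`-th root of unity `ζ`,
`y - ζ` and `x - ζ` are units; and for each `ω` with `ω^d = -1`, `x - ωy` is a unit. -/
theorem fermat_units (d : ℕ) (hd : 1 ≤ d) :
    (∀ ζ : ℂ, ζ ^ d = 1 →
        IsUnit (Ideal.Quotient.mk (fermatIdeal d) (Yf - algebraMap ℂ _ ζ)) ∧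
        IsUnit (Ideal.Quotient.mk (fermatIdeal d) (Xf - algebraMap ℂ _ ζ))) ∧
    (∀ ω : ℂ, ω ^ d = -1 →
        IsUnit (Ideal.Quotient.mk (fermatIdeal d) (Xf - algebraMap ℂ _ ω * Yf))) := by
  have hd' : 0 < d := hd
  set mk := Ideal.Quotient.mk (fermatIdeal d) with hmk
  -- the defining relation
  have hrel : mk Xf ^ d + mk Yf ^ d = 1 := by
    have : mk (Xf ^ d + Yf ^ d - 1) = 0 := by
      rw [Ideal.Quotient.eq_zero_iff_mem]
      exact Ideal.subset_span rfl
    have h := sub_eq_zero.mp (by simpa [map_sub, map_add, map_pow, map_one] using this)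
    simpa using h
  -- Xf and Yf are units
  have hXf : IsUnit Xf := by
    refine IsUnit.of_mul_eq_one (a := _) (AddMonoidAlgebra.single (-Finsupp.single 0 1) 1) ?_
    rw [Xf, AddMonoidAlgebra.single_mul_single, add_neg_cancel, mul_one,
      AddMonoidAlgebra.one_def]
  have hYf : IsUnit Yf := by
    refine IsUnit.of_mul_eq_one (a := _) (AddMonoidAlgebra.single (-Finsupp.single 1 1) 1) ?_
    rw [Yf, AddMonoidAlgebra.single_mul_single, add_neg_cancel, mul_one,
      AddMonoidAlgebra.one_def]
  have hX : IsUnit (mk Xf) := hXf.map mk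
  have hY : IsUnit (mk Yf) := hYf.map mk
  constructor
  · intro ζ hζ
    constructor
    · -- y - ζ
      rw [map_sub, Ideal.Quotient.mk_algebraMap]
      apply key_unit hd' _ _ hζ
      have : mk Yf ^ d - 1 = -(mk Xf ^ d) := by linear_combination hrel
      rw [this]
      exact (hX.pow d).neg
    · -- x - ζ
      rw [map_sub, Ideal.Quotient.mk_algebraMap]
      apply key_unit hd' _ _ hζ
      have : mk Xf ^ d - 1 = -(mk Yf ^ d) := by linear_combination hrel
      rw [this]
      exact (hY.pow d).neg
  · intro ω hω
    have hω0 : ω ≠ 0 := by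
      intro h
      rw [h, zero_pow hd'.ne'] at hω
      exact one_ne_zero (neg_eq_zero.mp hω.symm)
    obtain ⟨v, hv⟩ := hY.exists_right_inv
    have hvu : IsUnit v := IsUnit.of_mul_eq_one (a := v) (mk Yf) (by rw [mul_comm]; exact hv)
    set Z : (AddMonoidAlgebra ℂ (Fin 2 →₀ ℤ)) ⧸ fermatIdeal d :=
      algebraMap ℂ _ ω⁻¹ * mk Xf * v with hZdef
    have hωd : (ω⁻¹) ^ d = -1 := by rw [inv_pow, hω]; norm_num
    have hZd : Z ^ d - 1 = -(v ^ d) := by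
      have hA : algebraMap ℂ ((AddMonoidAlgebra ℂ (Fin 2 →₀ ℤ)) ⧸ fermatIdeal d) (ω⁻¹) ^ d
          = -1 := by rw [← map_pow, hωd, map_neg, map_one]
      have hvd : mk Yf ^ d * v ^ d = 1 := by rw [← mul_pow, hv, one_pow]
      calc Z ^ d - 1
          = algebraMap ℂ _ (ω⁻¹) ^ d * (mk Xf ^ d * v ^ d) - 1 := by
            rw [hZdef]; ring
        _ = -(v ^ d) := by
            rw [hA]
            linear_combination hvd - v ^ d * hrel
    have hZunit : IsUnit (Z ^ d - 1) := by rw [hZd]; exact (hvu.pow d).neg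
    have hZ1 : IsUnit (Z - 1) := by
      have := key_unit hd' Z hZunit (ζ := 1) (one_pow d)
      rwa [map_one] at this
    have hB : algebraMap ℂ _ ω * algebraMap ℂ _ ω⁻¹ *
        (mk Yf * v) = (1 : (AddMonoidAlgebra ℂ (Fin 2 →₀ ℤ)) ⧸ fermatIdeal d) := by
      rw [← map_mul, mul_inv_cancel₀ hω0, map_one, one_mul, hv]
    have hfact : mk (Xf - algebraMap ℂ _ ω * Yf)
        = (algebraMap ℂ _ ω * mk Yf) * (Z - 1) := by
      rw [map_sub, map_mul, Ideal.Quotient.mk_algebraMap, hZdef]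
      linear_combination (-(mk Xf)) * hB
    rw [hfact]
    exact ((hω0.isUnit.map (algebraMap ℂ (AddMonoidAlgebra ℂ (Fin 2 →₀ ℤ) ⧸ fermatIdeal d))).mul hY).mul hZ1
end

section
/- For d ≥ 1, the (3d) × (3d-1) integer block matrix M whose columns are: (a) the column (−1_{d}, 1_{d}, 0_{d}) recording div(x), (b) the column (−1_d, 0_d, 1_d) recording div(y), (c) for 0 ≤ j ≤ d−2 the column with −1 in each of the first d entries and d in position d+1+j (recording div(y−ζ^j)), (d) for 0 ≤ j ≤ d−2 the column with −1 in the first d entries and d in position 2d+1+j (recording div(x−ζ^j)), (e) for 0 ≤ j ≤ d−2 the column with entry d−1 in position j+1 and −1 in the other first-d positions (recording div(x−ω^{2j+1}y)), has rank 3d−1 over ℚ. -/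
/-- The `(3d) × (3d-1)` block matrix of divisors of the units of the Fermat curve
`x^d + y^d = 1`.  Rows are indexed by the boundary points
`P₀,...,P_{d−1}, Q₀,...,Q_{d−1}, T₀,...,T_{d−1}`, columns by the units
`x, y, (y−ζ^j)_{j<d-1}, (x−ζ^j)_{j<d-1}, (x−ω^{2j+1}y)_{j<d-1}`. -/
def fermatDivisorMatrix (d : ℕ) : Matrix (Fin (3 * d)) (Fin (3 * d - 1)) ℚ :=
  fun i j =>
    if j.val = 0 then
      -- div(x) = (−1_d, 1_d, 0_d)
      (if i.val < d then -1 else if i.val < 2 * d then 1 else 0)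
    else if j.val = 1 then
      -- div(y) = (−1_d, 0_d, 1_d)
      (if i.val < d then -1 else if i.val < 2 * d then 0 else 1)
    else if j.val < 2 + (d - 1) then
      -- div(y − ζ^{j'}), j' = j - 2 : −1 on first d entries, d in position d + 1 + j'
      (if i.val < d then -1 else if i.val = d + (j.val - 2) then (d : ℚ) else 0)
    else if j.val < 2 + 2 * (d - 1) then
      -- div(x − ζ^{j'}), j' = j - (d + 1) : −1 on first d entries, d in position 2d + 1 + j'
      (if i.val < d then -1 else if i.val = 2 * d + (j.val - (d + 1)) then (d : ℚ) else 0)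
    else
      -- div(x − ω^{2j'+1}y), j' = j - 2d : entry d − 1 in position j' + 1, −1 elsewhere
      -- among the first d entries
      (if i.val = j.val - 2 * d then (d : ℚ) - 1 else if i.val < d then -1 else 0)

private lemma sum_eq_pair' {n : ℕ} (f : Fin n → ℚ) (a b : Fin n) (hab : a ≠ b)
    (h : ∀ j, j ≠ a → j ≠ b → f j = 0) : ∑ j, f j = f a + f b := by
  rw [← Finset.sum_pair hab]
  refine (Finset.sum_subset (Finset.subset_univ _) ?_).symm
  intro x _ hx
  simp only [Finset.mem_insert, Finset.mem_singleton, not_or] at hx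
  exact h x hx.1 hx.2

set_option maxHeartbeats 2000000 in
/-- The Fermat divisor matrix has full rank `3d − 1` over `ℚ`. -/
theorem fermatDivisorMatrix_rank (d : ℕ) (hd : 1 ≤ d) :
    (fermatDivisorMatrix d).rank = 3 * d - 1 := by
  have hdQ : (d : ℚ) ≠ 0 := Nat.cast_ne_zero.mpr (by omega)
  have hinj : Function.Injective (fermatDivisorMatrix d).mulVecLin := by
    rw [← LinearMap.ker_eq_bot, LinearMap.ker_eq_bot']
    intro v hv
    have hrow : ∀ i : Fin (3 * d), ∑ j, fermatDivisorMatrix d i j * v j = 0 := by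
      intro i
      have := congrFun hv i
      simpa [Matrix.mulVecLin_apply, Matrix.mulVec, dotProduct] using this
    -- v 0 = 0
    have h0 : v ⟨0, by omega⟩ = 0 := by
      have h := hrow ⟨2 * d - 1, by omega⟩
      rw [Finset.sum_eq_single_of_mem (⟨0, by omega⟩ : Fin (3 * d - 1))
        (Finset.mem_univ _) ?_] at h
      · have he : fermatDivisorMatrix d ⟨2 * d - 1, by omega⟩ ⟨0, by omega⟩ = 1 := by
          simp only [fermatDivisorMatrix]
          split_ifs <;> first | contradiction | (exfalso; omega) | norm_num
        rw [he, one_mul] at h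
        exact h
      · intro b _ hb
        have hb' : b.val ≠ 0 := fun hh => hb (Fin.ext hh)
        have hbu := b.isLt
        have hz : fermatDivisorMatrix d ⟨2 * d - 1, by omega⟩ b = 0 := by
          simp only [fermatDivisorMatrix]
          split_ifs <;> first | contradiction | (exfalso; omega) | norm_num
        rw [hz, zero_mul]
    -- v 1 = 0
    have h1 : v ⟨1, by omega⟩ = 0 := by
      have h := hrow ⟨3 * d - 1, by omega⟩
      rw [Finset.sum_eq_single_of_mem (⟨1, by omega⟩ : Fin (3 * d - 1))
        (Finset.mem_univ _) ?_] at h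
      · have he : fermatDivisorMatrix d ⟨3 * d - 1, by omega⟩ ⟨1, by omega⟩ = 1 := by
          simp only [fermatDivisorMatrix]
          split_ifs <;> first | contradiction | (exfalso; omega) | norm_num
        rw [he, one_mul] at h
        exact h
      · intro b _ hb
        have hb' : b.val ≠ 1 := fun hh => hb (Fin.ext hh)
        have hbu := b.isLt
        have hz : fermatDivisorMatrix d ⟨3 * d - 1, by omega⟩ b = 0 := by
          simp only [fermatDivisorMatrix]
          split_ifs <;> first | contradiction | (exfalso; omega) | norm_num
        rw [hz, zero_mul]
    -- a-columns : v (2+t) = 0 for t < d - 1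
    have ha : ∀ t : ℕ, ∀ ht : t < d - 1, v ⟨2 + t, by omega⟩ = 0 := by
      intro t ht
      have h := hrow ⟨d + t, by omega⟩
      rw [sum_eq_pair' _ (⟨0, by omega⟩ : Fin (3 * d - 1)) (⟨2 + t, by omega⟩)
        (by simp only [ne_eq, Fin.ext_iff]; omega) ?_] at h
      · have e1 : fermatDivisorMatrix d ⟨d + t, by omega⟩ ⟨0, by omega⟩ = 1 := by
          simp only [fermatDivisorMatrix]
          split_ifs <;> first | contradiction | (exfalso; omega) | norm_num
        have e2 : fermatDivisorMatrix d ⟨d + t, by omega⟩ ⟨2 + t, by omega⟩ = d := by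
          simp only [fermatDivisorMatrix]
          split_ifs <;> first | contradiction | (exfalso; omega) | norm_num
        rw [e1, e2, one_mul, h0, zero_add] at h
        exact (mul_eq_zero.mp h).resolve_left hdQ
      · intro b hb1 hb2
        have hb1' : b.val ≠ 0 := fun hh => hb1 (Fin.ext hh)
        have hb2' : b.val ≠ 2 + t := fun hh => hb2 (Fin.ext hh)
        have hbu := b.isLt
        have hz : fermatDivisorMatrix d ⟨d + t, by omega⟩ b = 0 := by
          simp only [fermatDivisorMatrix]
          split_ifs <;> first | contradiction | (exfalso; omega) | norm_num
        rw [hz, zero_mul]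
    -- b-columns : v (d+1+t) = 0 for t < d - 1
    have hb : ∀ t : ℕ, ∀ ht : t < d - 1, v ⟨d + 1 + t, by omega⟩ = 0 := by
      intro t ht
      have h := hrow ⟨2 * d + t, by omega⟩
      rw [sum_eq_pair' _ (⟨1, by omega⟩ : Fin (3 * d - 1)) (⟨d + 1 + t, by omega⟩)
        (by simp only [ne_eq, Fin.ext_iff]; omega) ?_] at h
      · have e1 : fermatDivisorMatrix d ⟨2 * d + t, by omega⟩ ⟨1, by omega⟩ = 1 := by
          simp only [fermatDivisorMatrix]
          split_ifs <;> first | contradiction | (exfalso; omega) | norm_num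
        have e2 : fermatDivisorMatrix d ⟨2 * d + t, by omega⟩ ⟨d + 1 + t, by omega⟩ = d := by
          simp only [fermatDivisorMatrix]
          split_ifs <;> first | contradiction | (exfalso; omega) | norm_num
        rw [e1, e2, one_mul, h1, zero_add] at h
        exact (mul_eq_zero.mp h).resolve_left hdQ
      · intro b hb1 hb2
        have hb1' : b.val ≠ 1 := fun hh => hb1 (Fin.ext hh)
        have hb2' : b.val ≠ d + 1 + t := fun hh => hb2 (Fin.ext hh)
        have hbu := b.isLt
        have hz : fermatDivisorMatrix d ⟨2 * d + t, by omega⟩ b = 0 := by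
          simp only [fermatDivisorMatrix]
          split_ifs <;> first | contradiction | (exfalso; omega) | norm_num
        rw [hz, zero_mul]
    -- top rows : uniform formula
    have htop : ∀ c : ℕ, ∀ hc : c < d,
        ∑ j, fermatDivisorMatrix d ⟨c, by omega⟩ j * v j
          = (∑ j : Fin (3 * d - 1), if j.val = 2 * d + c then (d : ℚ) * v j else 0)
            - ∑ j, v j := by
      intro c hc
      rw [← Finset.sum_sub_distrib]
      refine Finset.sum_congr rfl fun j _ => ?_
      have hbu := j.isLt
      have hM : fermatDivisorMatrix d ⟨c, by omega⟩ j
          = (if j.val = 2 * d + c then (d : ℚ) else 0) - 1 := by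
        simp only [fermatDivisorMatrix]
        split_ifs <;> first | contradiction | (exfalso; omega) | norm_num
      rw [hM]
      split_ifs <;> ring
    -- sum of all entries of v is 0 (row d-1)
    have hS : ∑ j, v j = 0 := by
      have h := hrow ⟨d - 1, by omega⟩
      rw [htop (d - 1) (by omega)] at h
      have hz : (∑ j : Fin (3 * d - 1),
          if j.val = 2 * d + (d - 1) then (d : ℚ) * v j else 0) = 0 := by
        refine Finset.sum_eq_zero fun j _ => ?_
        have hbu := j.isLt
        exact if_neg (by omega)
      rw [hz, zero_sub, neg_eq_zero] at h
      exact h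
    -- e-columns : v (2d+t) = 0 for t < d - 1
    have he : ∀ t : ℕ, ∀ ht : t < d - 1, v ⟨2 * d + t, by omega⟩ = 0 := by
      intro t ht
      have h := hrow ⟨t, by omega⟩
      rw [htop t (by omega), hS, sub_zero] at h
      rw [Finset.sum_eq_single_of_mem (⟨2 * d + t, by omega⟩ : Fin (3 * d - 1))
        (Finset.mem_univ _)
        (fun b _ hb => if_neg (fun hh => hb (Fin.ext hh))), if_pos rfl] at h
      exact (mul_eq_zero.mp h).resolve_left hdQ
    funext j
    have hj := j.isLt
    show v j = 0
    rcases lt_or_ge j.val 2 with hc | hc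
    · rcases (by omega : j.val = 0 ∨ j.val = 1) with h | h
      · rw [show j = ⟨0, by omega⟩ from Fin.ext h]; exact h0
      · rw [show j = ⟨1, by omega⟩ from Fin.ext h]; exact h1
    rcases lt_or_ge j.val (d + 1) with hc2 | hc2
    · rw [show j = ⟨2 + (j.val - 2), by omega⟩ from Fin.ext (by show j.val = 2 + (j.val - 2); omega)]
      exact ha (j.val - 2) (by omega)
    rcases lt_or_ge j.val (2 * d) with hc3 | hc3
    · rw [show j = ⟨d + 1 + (j.val - (d + 1)), by omega⟩ from Fin.ext (by show j.val = d + 1 + (j.val - (d + 1)); omega)]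
      exact hb (j.val - (d + 1)) (by omega)
    · rw [show j = ⟨2 * d + (j.val - 2 * d), by omega⟩ from Fin.ext (by show j.val = 2 * d + (j.val - 2 * d); omega)]
      exact he (j.val - 2 * d) (by omega)
  rw [show (fermatDivisorMatrix d).rank
      = Module.finrank ℚ (LinearMap.range (fermatDivisorMatrix d).mulVecLin) from rfl,
    LinearMap.finrank_range_of_inj hinj, Module.finrank_fin_fun]
end

section
/- For d = 2, the sublattice of ℤ⁶ spanned by the columns of the 6×5 integer matrix [[−1,−1,−1,−1,1],[−1,−1,−1,−1,−1],[0,1,0,2,0],[0,1,0,0,0],[1,0,2,0,0],[1,0,0,0,0]] has index 4 in the full rank-5 lattice {v ∈ ℤ⁶ : sum of coordinates of v = 0}. -/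
/-- The divisors of the units `x, y, y−1, x−1, x−iy` on the very affine conic
`x² + y² = 1`, as the columns of the 6×5 matrix of the paper. -/
def conicUnitDivisors : Fin 5 → (Fin 6 → ℤ) :=
  ![![-1, -1, 0, 0, 1, 1],
    ![-1, -1, 1, 1, 0, 0],
    ![-1, -1, 0, 0, 2, 0],
    ![-1, -1, 2, 0, 0, 0],
    ![1, -1, 0, 0, 0, 0]]

/-- The degree-zero sublattice `{v ∈ ℤ⁶ : Σ vᵢ = 0}`. -/
def degZeroLattice : AddSubgroup (Fin 6 → ℤ) :=
  AddMonoidHom.ker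
    (AddMonoidHom.mk' (fun v : Fin 6 → ℤ => ∑ i, v i)
      (by intro v w; simp [Finset.sum_add_distrib]))

lemma cons_val_five {α : Type*} (a₀ a₁ a₂ a₃ a₄ a₅ : α) :
    ![a₀, a₁, a₂, a₃, a₄, a₅] 5 = a₅ := rfl

lemma mem_degZeroLattice (v : Fin 6 → ℤ) :
    v ∈ degZeroLattice ↔ v 0 + v 1 + v 2 + v 3 + v 4 + v 5 = 0 := by
  simp [degZeroLattice, AddMonoidHom.mem_ker, Fin.sum_univ_six]

/-- The mod-2 invariants `(v₃−v₂, v₁−v₀)` cutting out the unit lattice inside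
the degree-zero lattice. -/
def conicPhi : (Fin 6 → ℤ) →+ (ZMod 2 × ZMod 2) :=
  AddMonoidHom.mk' (fun v => (((v 3 - v 2 : ℤ) : ZMod 2), ((v 1 - v 0 : ℤ) : ZMod 2)))
    (by intro v w; simp only [Pi.add_apply, Prod.mk_add_mk, Prod.mk.injEq]; constructor <;> push_cast <;> ring)

lemma conic_mem_of_phi (v : Fin 6 → ℤ) (hv : v ∈ degZeroLattice)
    (h1 : (2:ℤ) ∣ v 3 - v 2) (h2 : (2:ℤ) ∣ v 1 - v 0) :
    v ∈ AddSubgroup.closure (Set.range conicUnitDivisors) := by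
  obtain ⟨a, ha⟩ := h1
  obtain ⟨b, hb⟩ := h2
  have hs : v 0 + v 1 + v 2 + v 3 + v 4 + v 5 = 0 := by
    have := hv
    simp only [degZeroLattice, AddMonoidHom.mem_ker, AddMonoidHom.mk'_apply] at this
    simpa [Fin.sum_univ_six] using this
  have hmem : ∀ i, conicUnitDivisors i ∈
      AddSubgroup.closure (Set.range conicUnitDivisors) := fun i =>
    AddSubgroup.subset_closure ⟨i, rfl⟩
  have key : v = (-2 * v 0 - 2 * v 2 - v 4 - 2*a - 2*b) • conicUnitDivisors 0
      + (v 2 + 2*a) • conicUnitDivisors 1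
      + (v 0 + v 2 + v 4 + a + b) • conicUnitDivisors 2
      + (-a) • conicUnitDivisors 3
      + (-b) • conicUnitDivisors 4 := by
    funext i
    fin_cases i <;>
      simp [conicUnitDivisors, Matrix.cons_val_succ, cons_val_five, Pi.add_apply, Pi.smul_apply,
        smul_eq_mul] <;> omega
  rw [key]
  exact AddSubgroup.add_mem _ (AddSubgroup.add_mem _ (AddSubgroup.add_mem _
    (AddSubgroup.add_mem _ (AddSubgroup.zsmul_mem _ (hmem 0) _)
      (AddSubgroup.zsmul_mem _ (hmem 1) _)) (AddSubgroup.zsmul_mem _ (hmem 2) _))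
    (AddSubgroup.zsmul_mem _ (hmem 3) _)) (AddSubgroup.zsmul_mem _ (hmem 4) _)

lemma conic_phi_closure :
    ∀ v ∈ AddSubgroup.closure (Set.range conicUnitDivisors), conicPhi v = 0 := by
  intro v hv
  refine AddSubgroup.closure_induction ?_ (by simp) ?_ ?_ hv
  · rintro x ⟨i, rfl⟩
    fin_cases i <;> decide
  · intro x y _ _ hx hy; simp [map_add, hx, hy]
  · intro x _ hx; simp [map_neg, hx]

/-- The lattice spanned by the divisors of the units `x, y, y−1, x−1, x−iy` on the
conic `x² + y² = 1` has index 4 in the degree-zero sublattice of `ℤ⁶`. -/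
theorem conic_unit_lattice_index :
    AddSubgroup.closure (Set.range conicUnitDivisors) ≤ degZeroLattice ∧
    (AddSubgroup.closure (Set.range conicUnitDivisors)).relIndex degZeroLattice = 4 := by
  constructor
  · rw [AddSubgroup.closure_le]
    rintro x ⟨i, rfl⟩
    rw [SetLike.mem_coe, mem_degZeroLattice]
    fin_cases i <;> decide
  · set L := AddSubgroup.closure (Set.range conicUnitDivisors)
    set ψ : degZeroLattice →+ (ZMod 2 × ZMod 2) :=
      conicPhi.comp degZeroLattice.subtype with hψ
    have hker : ψ.ker = L.addSubgroupOf degZeroLattice := by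
      ext x
      constructor
      · intro hx
        simp only [hψ, AddMonoidHom.mem_ker, AddMonoidHom.comp_apply,
          AddSubgroup.coe_subtype, conicPhi, AddMonoidHom.mk'_apply, Prod.mk_eq_zero] at hx
        obtain ⟨h1, h2⟩ := hx
        rw [ZMod.intCast_zmod_eq_zero_iff_dvd] at h1 h2
        exact conic_mem_of_phi _ x.2 (by exact_mod_cast h1) (by exact_mod_cast h2)
      · intro hx
        simp only [AddMonoidHom.mem_ker, hψ, AddMonoidHom.comp_apply,
          AddSubgroup.coe_subtype]
        exact conic_phi_closure _ hx
    have hsurj : Function.Surjective ψ := by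
      intro z
      have e1 : (⟨![0, 0, -1, 0, 1, 0], by rw [mem_degZeroLattice]; decide⟩ : degZeroLattice) ∈ Set.univ := trivial
      -- images: ψ of u = (0,0,-1,0,1,0) is (1,0); ψ of w = (-1,0,0,0,1,0) is (0,1)
      refine ⟨(z.1.val : ℤ) • ⟨![0, 0, -1, 0, 1, 0], by rw [mem_degZeroLattice]; decide⟩
          + (z.2.val : ℤ) • ⟨![-1, 0, 0, 0, 1, 0], by rw [mem_degZeroLattice]; decide⟩, ?_⟩
      have h1 : ψ ⟨![0, 0, -1, 0, 1, 0], by rw [mem_degZeroLattice]; decide⟩ = (1, 0) := by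
        simp only [hψ, AddMonoidHom.comp_apply, AddSubgroup.coe_subtype, conicPhi,
          AddMonoidHom.mk'_apply]
        norm_num
        decide
      have h2 : ψ ⟨![-1, 0, 0, 0, 1, 0], by rw [mem_degZeroLattice]; decide⟩ = (0, 1) := by
        simp only [hψ, AddMonoidHom.comp_apply, AddSubgroup.coe_subtype, conicPhi,
          AddMonoidHom.mk'_apply]
        norm_num
        decide
      rw [map_add, map_zsmul, map_zsmul, h1, h2]
      ext
      · simp [ZMod.intCast_cast, ZMod.intCast_zmod_cast]
      · simp [ZMod.intCast_cast, ZMod.intCast_zmod_cast]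
    have : (L.addSubgroupOf degZeroLattice).index = 4 := by
      rw [AddSubgroup.index, ← hker]
      rw [Nat.card_congr (QuotientAddGroup.quotientKerEquivOfSurjective ψ hsurj).toEquiv]
      simp [Nat.card_prod, Nat.card_zmod]
    exact this
end
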